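/- Let I be a nonempty index set, let (X_i)_{i∈I} be any family of real Banach spaces and let X be the c0-sum of (X_i)_{i∈I}. Then R(X) = sup_{i∈I} R(X_i). -/

import Mathlib

open Filter Topology MeasureTheory
open scoped ENNReal ZeroAtInfty

noncomputable section

/-- A sequence in a Banach space is weakly null if `φ (x n) → 0` for every
continuous linear functional `φ`. -/
def WeaklyNull {X : Type*} [NormedAddCommGroup X] [NormedSpace ℝ X] (u : ℕ → X) : Prop :=
  ∀ φ : X →L[ℝ] ℝ, Tendsto (fun n => φ (u n)) atTop (𝓝 0)

/-- The Schur property: every weakly null sequence converges to `0` in norm. -/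
def SchurProperty (X : Type*) [NormedAddCommGroup X] [NormedSpace ℝ X] : Prop :=
  ∀ u : ℕ → X, WeaklyNull u → Tendsto (fun n => ‖u n‖) atTop (𝓝 0)

/-- The Opial modulus `r_X(c)`. -/
def opialModulus (X : Type*) [NormedAddCommGroup X] [NormedSpace ℝ X] (c : ℝ) : ℝ :=
  sInf { d : ℝ | ∃ (x : X) (u : ℕ → X), c ≤ ‖x‖ ∧ WeaklyNull u ∧
    1 ≤ liminf (fun n => ‖u n‖) atTop ∧
    d = liminf (fun n => ‖u n - x‖) atTop - 1 }

/-- The modulus `η_X(ε, R)`. -/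
def etaModulus (X : Type*) [NormedAddCommGroup X] [NormedSpace ℝ X] (ε R : ℝ) : ℝ :=
  sInf { d : ℝ | ∃ (x : X) (u : ℕ → X), ε ≤ ‖x‖ ∧ WeaklyNull u ∧
    limsup (fun n => ‖u n‖) atTop ≤ R ∧
    d = liminf (fun n => ‖u n - x‖) atTop - liminf (fun n => ‖u n‖) atTop }

/-- The García-Falset coefficient `R(X)`. -/
def garciaFalset (X : Type*) [NormedAddCommGroup X] [NormedSpace ℝ X] : ℝ :=
  sSup { a : ℝ | ∃ (x : X) (u : ℕ → X), ‖x‖ ≤ 1 ∧ (∀ n, ‖u n‖ ≤ 1) ∧ WeaklyNull u ∧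
    a = liminf (fun n => ‖u n + x‖) atTop }

/-- The degree of WORTHness `w(X)`. -/
def worthDegree (X : Type*) [NormedAddCommGroup X] [NormedSpace ℝ X] : ℝ :=
  sSup { r : ℝ | 0 ≤ r ∧ ∀ (x : X) (u : ℕ → X), WeaklyNull u →
    r * liminf (fun n => ‖u n + x‖) atTop ≤ liminf (fun n => ‖u n - x‖) atTop }

/-- Gao's modulus of u-convexity `u_X(ε)`. -/
def uModulus (X : Type*) [NormedAddCommGroup X] [NormedSpace ℝ X] (ε : ℝ) : ℝ :=
  sInf { d : ℝ | ∃ (x y : X) (φ : X →L[ℝ] ℝ), ‖x‖ = 1 ∧ ‖y‖ = 1 ∧ ‖φ‖ = 1 ∧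
    φ x = 1 ∧ φ y ≤ 1 - ε ∧ d = 1 - ‖(2⁻¹ : ℝ) • (x + y)‖ }

/-- The c₀-sum of a family of Banach spaces: the closure, inside the ℓ∞-sum, of the
set of finitely supported families. -/
def c0Sum {I : Type*} (X : I → Type*) [∀ i, NormedAddCommGroup (X i)]
    [∀ i, NormedSpace ℝ (X i)] : Submodule ℝ (lp X ∞) :=
  (Submodule.span ℝ { f : lp X ∞ | Set.Finite { i | (f : ∀ i, X i) i ≠ 0 } }).topologicalClosure

end

/-!
A weakly null sequence `u` in the c₀-sum is weakly null in every coordinate, and `x` is `ε`-small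
off a finite set `F` of coordinates. Along a subsequence on which the finitely many numbers
`‖u n i + x i‖`, `i ∈ F`, converge, each limit is at most `R(X i)`; off `F` the coordinate is at
most `‖u n i‖ + ε ≤ R(X i) + ε`, because `‖y‖ ≤ R(Y)` on the unit ball (take the zero sequence).
Conversely each `X i` embeds isometrically in the c₀-sum.
-/

section GarciaFalset

theorem liminf_norm_add_le_two {E : Type*} [SeminormedAddCommGroup E] {x : E} {u : ℕ → E}
    (hx : ‖x‖ ≤ 1) (hu : ∀ n, ‖u n‖ ≤ 1) :
    liminf (fun n => ‖u n + x‖) atTop ≤ 2 :=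
  liminf_le_of_frequently_le
    (Eventually.of_forall fun n => (norm_add_le _ _).trans (by linarith [hu n])).frequently
    (isBoundedUnder_of ⟨0, fun n => norm_nonneg _⟩)

variable {Y Z : Type*} [NormedAddCommGroup Y] [NormedSpace ℝ Y]
  [NormedAddCommGroup Z] [NormedSpace ℝ Z]

theorem weaklyNull_zero : WeaklyNull (0 : ℕ → Y) := fun φ => by simp

theorem WeaklyNull.map {u : ℕ → Y} (hu : WeaklyNull u) (T : Y →L[ℝ] Z) :
    WeaklyNull fun n => T (u n) :=
  fun φ => hu (φ.comp T)

theorem WeaklyNull.comp_tendsto {u : ℕ → Y} (hu : WeaklyNull u) {φ : ℕ → ℕ}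
    (hφ : Tendsto φ atTop atTop) : WeaklyNull (u ∘ φ) :=
  fun ψ => (hu ψ).comp hφ

theorem le_garciaFalset {x : Y} {u : ℕ → Y} (hx : ‖x‖ ≤ 1) (hu : ∀ n, ‖u n‖ ≤ 1)
    (hw : WeaklyNull u) : liminf (fun n => ‖u n + x‖) atTop ≤ garciaFalset Y :=
  le_csSup ⟨2, by rintro _ ⟨x, u, hx, hu, -, rfl⟩; exact liminf_norm_add_le_two hx hu⟩
    ⟨x, u, hx, hu, hw, rfl⟩

theorem garciaFalset_le {c : ℝ}
    (h : ∀ (x : Y) (u : ℕ → Y), ‖x‖ ≤ 1 → (∀ n, ‖u n‖ ≤ 1) → WeaklyNull u →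
      liminf (fun n => ‖u n + x‖) atTop ≤ c) :
    garciaFalset Y ≤ c :=
  csSup_le ⟨_, 0, 0, by simp, by simp, weaklyNull_zero, rfl⟩
    (by rintro _ ⟨x, u, hx, hu, hw, rfl⟩; exact h x u hx hu hw)

theorem norm_le_garciaFalset {x : Y} (hx : ‖x‖ ≤ 1) : ‖x‖ ≤ garciaFalset Y := by
  simpa using le_garciaFalset hx (u := 0) (by simp) weaklyNull_zero

theorem garciaFalset_nonneg : 0 ≤ garciaFalset Y := by
  simpa using norm_le_garciaFalset (x := (0 : Y)) (by simp)

theorem garciaFalset_le_two : garciaFalset Y ≤ 2 :=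
  garciaFalset_le fun _ _ hx hu _ => liminf_norm_add_le_two hx hu

theorem garciaFalset_le_of_linearIsometry (e : Y →ₗᵢ[ℝ] Z) :
    garciaFalset Y ≤ garciaFalset Z :=
  garciaFalset_le fun x u hx hu hw => by
    simpa [← map_add, e.norm_map] using
      le_garciaFalset (x := e x) (u := fun n => e (u n)) (by simpa using hx) (by simpa using hu)
        (hw.map e.toContinuousLinearMap)

end GarciaFalset

theorem exists_subseq_tendsto_of_abs_le {ι : Type*} [Finite ι] {a : ℕ → ι → ℝ} {C : ℝ}
    (h : ∀ n i, |a n i| ≤ C) :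
    ∃ L : ι → ℝ, ∃ φ : ℕ → ℕ, StrictMono φ ∧ Tendsto (a ∘ φ) atTop (𝓝 L) := by
  cases nonempty_fintype ι
  obtain ⟨L, -, φ, hφ, hL⟩ := tendsto_subseq_of_bounded (x := a)
    (Metric.isBounded_closedBall (x := 0) (r := max C 0)) fun n => by
      rw [mem_closedBall_zero_iff, pi_norm_le_iff_of_nonneg (le_max_right C 0)]
      exact fun i => (h n i).trans (le_max_left C 0)
  exact ⟨L, φ, hφ, hL⟩

namespace c0Sum

variable {I : Type*} (X : I → Type*) [∀ i, NormedAddCommGroup (X i)] [∀ i, NormedSpace ℝ (X i)]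

theorem support_finite_of_mem_span {f : lp X ∞}
    (hf : f ∈ Submodule.span ℝ { f : lp X ∞ | Set.Finite { i | (f : ∀ i, X i) i ≠ 0 } }) :
    Set.Finite { i | (f : ∀ i, X i) i ≠ 0 } := by
  induction hf using Submodule.span_induction with
  | mem g hg => exact hg
  | zero => simp
  | add g h _ _ hg hh =>
    refine (hg.union hh).subset fun i hi => ?_
    by_contra hc
    simp only [Set.mem_union, Set.mem_ofPred_eq, not_or, not_not] at hc
    exact hi (by simp [hc.1, hc.2])
  | smul c g _ hg => exact hg.subset fun i hi h0 => hi (by simp [h0])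

theorem tendsto_norm_apply {f : lp X ∞} (hf : f ∈ c0Sum X) :
    Tendsto (fun i => ‖f i‖) cofinite (𝓝 0) := by
  refine Metric.tendsto_nhds.2 fun ε hε => ?_
  obtain ⟨g, hg, hfg⟩ := Metric.mem_closure_iff.1 hf ε hε
  filter_upwards [(support_finite_of_mem_span X hg).compl_mem_cofinite] with i hi
  have hgi : g i = 0 := not_not.1 hi
  calc dist ‖f i‖ 0 = ‖(f - g) i‖ := by simp [hgi]
    _ ≤ ‖f - g‖ := lp.norm_apply_le_norm ENNReal.top_ne_zero _ i
    _ < ε := by rwa [← dist_eq_norm]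

theorem single_mem [DecidableEq I] (i : I) (x : X i) : lp.single ∞ i x ∈ c0Sum X :=
  Submodule.le_topologicalClosure _ <| Submodule.subset_span <|
    (Set.finite_singleton i).subset fun _ hj => by_contra fun h => hj (lp.single_apply_ne ∞ i x h)

noncomputable def singleₗᵢ [DecidableEq I] (i : I) : X i →ₗᵢ[ℝ] c0Sum X where
  toLinearMap := (lp.lsingle ∞ i).codRestrict (c0Sum X) (single_mem X i)
  norm_map' := lp.norm_single ENNReal.zero_lt_top i

variable {X}

theorem frequently_norm_add_le_iSup_garciaFalset_add {x : c0Sum X} {u : ℕ → c0Sum X}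
    (hx : ‖x‖ ≤ 1) (hu : ∀ n, ‖u n‖ ≤ 1) (hw : WeaklyNull u) {ε : ℝ} (hε : 0 < ε) :
    ∃ᶠ n in atTop, ‖u n + x‖ ≤ (⨆ i, garciaFalset (X i)) + ε := by
  set S := ⨆ i, garciaFalset (X i)
  have hRS : ∀ i, garciaFalset (X i) ≤ S :=
    le_ciSup ⟨2, by rintro _ ⟨i, rfl⟩; exact garciaFalset_le_two⟩
  have hS : 0 ≤ S := Real.iSup_nonneg fun i => garciaFalset_nonneg
  have hcoord : ∀ (z : c0Sum X) i, ‖(z : lp X ∞) i‖ ≤ ‖z‖ :=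
    fun z i => lp.norm_apply_le_norm ENNReal.top_ne_zero _ i
  set F := {i | ¬ ‖(x : lp X ∞) i‖ ≤ ε}
  have : Finite F :=
    (eventually_cofinite.1 ((tendsto_norm_apply X x.2).eventually_le_const hε)).to_subtype
  obtain ⟨L, φ, hφ, hL⟩ := exists_subseq_tendsto_of_abs_le (C := 2)
    (a := fun n (i : F) => ‖(u n : lp X ∞) i + (x : lp X ∞) i‖) fun n i => by
      rw [abs_norm]
      linarith [norm_add_le ((u n : lp X ∞) i) ((x : lp X ∞) i), (hcoord (u n) i).trans (hu n),
        (hcoord x i).trans hx]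
  have hLS (i : F) : L i ≤ S := by
    have hw_i := (hw.map (lp.evalCLM ℝ X ∞ i ∘L (c0Sum X).subtypeL)).comp_tendsto hφ.tendsto_atTop
    rw [← (tendsto_pi_nhds.1 hL i).liminf_eq]
    exact (le_garciaFalset ((hcoord x i).trans hx) (fun k => (hcoord _ i).trans (hu _)) hw_i).trans
      (hRS i)
  have hF : ∀ᶠ k in atTop, ∀ i : F, ‖(u (φ k) : lp X ∞) i + (x : lp X ∞) i‖ ≤ S + ε :=
    eventually_all.2 fun i => (tendsto_pi_nhds.1 hL i).eventually_le_const (by linarith [hLS i])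
  refine hφ.tendsto_atTop.frequently (hF.mono fun k hk => ?_).frequently
  refine lp.norm_le_of_forall_le (by linarith) fun i => ?_
  by_cases hi : i ∈ F
  · simpa using hk ⟨i, hi⟩
  · calc ‖((u (φ k) + x : c0Sum X) : lp X ∞) i‖
        ≤ ‖(u (φ k) : lp X ∞) i‖ + ‖(x : lp X ∞) i‖ := by simpa using norm_add_le _ _
      _ ≤ garciaFalset (X i) + ε :=
        add_le_add (norm_le_garciaFalset ((hcoord _ i).trans (hu _))) (not_not.1 hi)
      _ ≤ S + ε := by linarith [hRS i]

theorem liminf_norm_add_le_iSup_garciaFalset {x : c0Sum X} {u : ℕ → c0Sum X}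
    (hx : ‖x‖ ≤ 1) (hu : ∀ n, ‖u n‖ ≤ 1) (hw : WeaklyNull u) :
    liminf (fun n => ‖u n + x‖) atTop ≤ ⨆ i, garciaFalset (X i) :=
  le_of_forall_pos_le_add fun _ hε =>
    liminf_le_of_frequently_le (frequently_norm_add_le_iSup_garciaFalset_add hx hu hw hε)
      (isBoundedUnder_of ⟨0, fun _ => norm_nonneg _⟩)

end c0Sum

theorem statement8_general {I : Type*} (X : I → Type*) [∀ i, NormedAddCommGroup (X i)]
    [∀ i, NormedSpace ℝ (X i)] :
    garciaFalset (c0Sum X) = ⨆ i, garciaFalset (X i) := by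
  classical
  refine le_antisymm (garciaFalset_le fun _ _ => c0Sum.liminf_norm_add_le_iSup_garciaFalset) ?_
  exact Real.iSup_le (fun i => garciaFalset_le_of_linearIsometry (c0Sum.singleₗᵢ X i))
    garciaFalset_nonneg

/-- The García-Falset coefficient of the c₀-sum of a nonempty family of Banach spaces equals
the supremum of the García-Falset coefficients of the summands. -/
theorem statement8 {I : Type*} [Nonempty I] (X : I → Type*) [∀ i, NormedAddCommGroup (X i)]
    [∀ i, NormedSpace ℝ (X i)] [∀ i, CompleteSpace (X i)] :
    garciaFalset (c0Sum X) = ⨆ i, garciaFalset (X i) :=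
  statement8_general X
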